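/- The Equivariant Spatial Module (ESM) layer is E(3)-equivariant: let N be a positive integer, h : Fin N → ℝᶜ be node features, A : Fin N → Fin N → ℝᵐ and c : Fin N → ℝᵀ be position-independent features, 𝒩 : Fin N → Finset (Fin N) assign each node a nonempty neighborhood, and let φ_m : ℝᶜ × ℝᶜ × ℝ × ℝᵐ → ℝᵈ, φ_h : ℝᶜ × ℝᵀ × ℝᵈ → ℝᶜ, φ_x : ℝᵈ → ℝ be arbitrary functions. For positions y : Fin N → ℝ³, define m_{ij}(y) = φ_m(h_i, h_j, ‖y_i - y_j‖², A_{ij}), h'_i(y) = h_i + φ_h(h_i, c_i, Σ_{j ≠ i} m_{ij}(y)), and y'_i = y_i + (1/|𝒩(i)|) Σ_{j ∈ 𝒩(i)} (y_i - y_j) · φ_x(m_{ij}(y)). Then for every real orthogonal 3×3 matrix O and every b ∈ ℝ³, applying the layer to the transformed positions i ↦ O·y_i + b yields h'_i(O·y + b) = h'_i(y) for all i (invariance of features) and output positions equal to O·y'_i + b for all i (equivariance of positions). -/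

import Mathlib

open scoped BigOperators

/-- The E(3) action `y ↦ O·y + b` on 3-vectors. -/
noncomputable def e3Act (O : Matrix (Fin 3) (Fin 3) ℝ) (b : EuclideanSpace ℝ (Fin 3))
    (v : EuclideanSpace ℝ (Fin 3)) : EuclideanSpace ℝ (Fin 3) :=
  (show EuclideanSpace ℝ (Fin 3) from WithLp.toLp 2 (O.mulVec v)) + b

/-- ESM messages `m_{ij}(y) = φ_m(h_i, h_j, ‖y_i - y_j‖², A_{ij})`. -/
noncomputable def esmMsg {N c d m : ℕ}
    (φm : (Fin c → ℝ) → (Fin c → ℝ) → ℝ → (Fin m → ℝ) → (Fin d → ℝ))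
    (h : Fin N → (Fin c → ℝ)) (A : Fin N → Fin N → (Fin m → ℝ))
    (y : Fin N → EuclideanSpace ℝ (Fin 3)) (i j : Fin N) : Fin d → ℝ :=
  φm (h i) (h j) (‖y i - y j‖ ^ 2) (A i j)

/-- ESM feature update `h'_i(y) = h_i + φ_h(h_i, c_i, Σ_{j ≠ i} m_{ij}(y))`. -/
noncomputable def esmFeat {N c d m τ : ℕ}
    (φm : (Fin c → ℝ) → (Fin c → ℝ) → ℝ → (Fin m → ℝ) → (Fin d → ℝ))
    (φh : (Fin c → ℝ) → (Fin τ → ℝ) → (Fin d → ℝ) → (Fin c → ℝ))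
    (h : Fin N → (Fin c → ℝ)) (A : Fin N → Fin N → (Fin m → ℝ))
    (cf : Fin N → (Fin τ → ℝ))
    (y : Fin N → EuclideanSpace ℝ (Fin 3)) (i : Fin N) : Fin c → ℝ :=
  h i + φh (h i) (cf i) (∑ j ∈ Finset.univ.erase i, esmMsg φm h A y i j)

/-- ESM position update
`y'_i = y_i + (1/|𝒩(i)|) Σ_{j ∈ 𝒩(i)} (y_i - y_j) · φ_x(m_{ij}(y))`. -/
noncomputable def esmPos {N c d m : ℕ}
    (φm : (Fin c → ℝ) → (Fin c → ℝ) → ℝ → (Fin m → ℝ) → (Fin d → ℝ))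
    (φx : (Fin d → ℝ) → ℝ)
    (h : Fin N → (Fin c → ℝ)) (A : Fin N → Fin N → (Fin m → ℝ))
    (𝒩 : Fin N → Finset (Fin N))
    (y : Fin N → EuclideanSpace ℝ (Fin 3)) (i : Fin N) : EuclideanSpace ℝ (Fin 3) :=
  y i + ((𝒩 i).card : ℝ)⁻¹ • ∑ j ∈ 𝒩 i, φx (esmMsg φm h A y i j) • (y i - y j)

/-! Messages see positions only through the distances ‖y_i - y_j‖, which an affine isometry
preserves, so messages and features are invariant. The position update is y_i plus a combination
of differences y_i - y_j with invariant coefficients, and an affine isometry maps such a point to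
the image of y_i plus the same combination of the images of the differences; hence the update
commutes with it. For orthogonal O, y ↦ O·y + b is an affine isometry. -/

namespace Matrix

variable {n : Type*} [Fintype n] [DecidableEq n]

noncomputable def orthogonalLinearIsometry (O : Matrix n n ℝ) (hO : O ∈ orthogonalGroup n ℝ) :
    EuclideanSpace ℝ n →ₗᵢ[ℝ] EuclideanSpace ℝ n :=
  (toLpLin 2 2 O).isometryOfInner fun x y => by
    simp only [EuclideanSpace.inner_eq_star_dotProduct, toLpLin_apply, star_trivial]
    rw [dotProduct_mulVec, vecMul_mulVec, (mem_orthogonalGroup_iff' n ℝ).mp hO, vecMul_one]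

end Matrix

local notation "ℝ³" => EuclideanSpace ℝ (Fin 3)

noncomputable def e3AffineIsometry (O : Matrix (Fin 3) (Fin 3) ℝ)
    (hO : O ∈ Matrix.orthogonalGroup (Fin 3) ℝ) (b : ℝ³) : ℝ³ →ᵃⁱ[ℝ] ℝ³ :=
  (AffineIsometryEquiv.constVAdd ℝ ℝ³ b).toAffineIsometry.comp
    (O.orthogonalLinearIsometry hO).toAffineIsometry

theorem coe_e3AffineIsometry (O : Matrix (Fin 3) (Fin 3) ℝ)
    (hO : O ∈ Matrix.orthogonalGroup (Fin 3) ℝ) (b : ℝ³) :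
    ⇑(e3AffineIsometry O hO b) = e3Act O b := by
  ext1 v
  exact add_comm _ _

section AffineInvariance

variable {N c d m : ℕ} (φm : (Fin c → ℝ) → (Fin c → ℝ) → ℝ → (Fin m → ℝ) → (Fin d → ℝ))
  (h : Fin N → (Fin c → ℝ)) (A : Fin N → Fin N → (Fin m → ℝ))
  (y : Fin N → ℝ³) (f : ℝ³ →ᵃⁱ[ℝ] ℝ³)

theorem esmMsg_comp_affineIsometry :
    esmMsg φm h A (fun k => f (y k)) = esmMsg φm h A y := by
  funext i j
  simp only [esmMsg, ← dist_eq_norm, f.dist_map]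

theorem esmFeat_comp_affineIsometry {τ : ℕ}
    (φh : (Fin c → ℝ) → (Fin τ → ℝ) → (Fin d → ℝ) → (Fin c → ℝ))
    (cf : Fin N → (Fin τ → ℝ)) (i : Fin N) :
    esmFeat φm φh h A cf (fun k => f (y k)) i = esmFeat φm φh h A cf y i := by
  rw [esmFeat, esmMsg_comp_affineIsometry, esmFeat]

theorem esmPos_comp_affineIsometry (φx : (Fin d → ℝ) → ℝ) (𝒩 : Fin N → Finset (Fin N))
    (i : Fin N) :
    esmPos φm φx h A 𝒩 (fun k => f (y k)) i = f (esmPos φm φx h A 𝒩 y i) := by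
  rw [esmPos, esmMsg_comp_affineIsometry, esmPos]
  conv_rhs => rw [add_comm, ← vadd_eq_add, f.map_vadd, vadd_eq_add, add_comm]
  simp only [map_smul, map_sum, ← vsub_eq_sub, f.map_vsub]

end AffineInvariance

theorem esm_E3_equivariant_general (N c d m τ : ℕ)
    (h : Fin N → (Fin c → ℝ)) (A : Fin N → Fin N → (Fin m → ℝ))
    (cf : Fin N → (Fin τ → ℝ))
    (𝒩 : Fin N → Finset (Fin N))
    (φm : (Fin c → ℝ) → (Fin c → ℝ) → ℝ → (Fin m → ℝ) → (Fin d → ℝ))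
    (φh : (Fin c → ℝ) → (Fin τ → ℝ) → (Fin d → ℝ) → (Fin c → ℝ))
    (φx : (Fin d → ℝ) → ℝ)
    (y : Fin N → EuclideanSpace ℝ (Fin 3))
    (O : Matrix (Fin 3) (Fin 3) ℝ) (hO : O ∈ Matrix.orthogonalGroup (Fin 3) ℝ)
    (b : EuclideanSpace ℝ (Fin 3)) :
    (∀ i, esmFeat φm φh h A cf (fun j => e3Act O b (y j)) i = esmFeat φm φh h A cf y i) ∧
      (∀ i, esmPos φm φx h A 𝒩 (fun j => e3Act O b (y j)) i =
        e3Act O b (esmPos φm φx h A 𝒩 y i)) := by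
  rw [← coe_e3AffineIsometry O hO b]
  exact ⟨esmFeat_comp_affineIsometry φm h A y _ φh cf,
    esmPos_comp_affineIsometry φm h A y _ φx 𝒩⟩

/-- The Equivariant Spatial Module (ESM) layer is E(3)-equivariant:
for any orthogonal `O` and translation `b`, applying the layer to the transformed
positions `i ↦ O·y_i + b` leaves the updated features unchanged and transforms the
updated positions by the same `O, b`. -/
theorem esm_E3_equivariant (N c d m τ : ℕ) (hN : 0 < N)
    (h : Fin N → (Fin c → ℝ)) (A : Fin N → Fin N → (Fin m → ℝ))
    (cf : Fin N → (Fin τ → ℝ))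
    (𝒩 : Fin N → Finset (Fin N)) (h𝒩 : ∀ i, (𝒩 i).Nonempty)
    (φm : (Fin c → ℝ) → (Fin c → ℝ) → ℝ → (Fin m → ℝ) → (Fin d → ℝ))
    (φh : (Fin c → ℝ) → (Fin τ → ℝ) → (Fin d → ℝ) → (Fin c → ℝ))
    (φx : (Fin d → ℝ) → ℝ)
    (y : Fin N → EuclideanSpace ℝ (Fin 3))
    (O : Matrix (Fin 3) (Fin 3) ℝ) (hO : O ∈ Matrix.orthogonalGroup (Fin 3) ℝ)
    (b : EuclideanSpace ℝ (Fin 3)) :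
    (∀ i, esmFeat φm φh h A cf (fun j => e3Act O b (y j)) i = esmFeat φm φh h A cf y i) ∧
      (∀ i, esmPos φm φx h A 𝒩 (fun j => e3Act O b (y j)) i =
        e3Act O b (esmPos φm φx h A 𝒩 y i)) :=
  esm_E3_equivariant_general N c d m τ h A cf 𝒩 φm φh φx y O hO b
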